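/- arXiv:1811.00384 — 2 statements merged into one kernel-verified Lean document; each statement's English description precedes it below -/
import Mathlib

section
/- The decimal encoding is injective: the map sending a convergent integer n ≥ 2 to the natural number m(n) = Σ_{i < σ∞(n)} b_i(n)·2^i (the integer whose binary representation is the binary encoding of n) is injective on the set of convergent integers ≥ 2. -/
/-- The accelerated Collatz map: `n/2` if `n` is even, `(3n+1)/2` if `n` is odd. -/
def T (n : ℕ) : ℕ := if n % 2 = 0 then n / 2 else (3 * n + 1) / 2

/-- `n` is convergent if some iterate of `T` starting at `n` equals `1`. -/
def Convergent (n : ℕ) : Prop := ∃ k, T^[k] n = 1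

/-- The total stopping time `σ∞(n)`: the least `k` with `T^[k] n = 1`. -/
noncomputable def sigma (n : ℕ) : ℕ := sInf {k | T^[k] n = 1}

/-- The `i`-th bit of the binary encoding of `n`:
`1` if `T^[i] n` is even, `0` if `T^[i] n` is odd. -/
def bit (i n : ℕ) : ℕ := if T^[i] n % 2 = 0 then 1 else 0

/-- The decimal encoding of `n`: the natural number whose binary
representation is the binary encoding of `n`. -/
noncomputable def enc (n : ℕ) : ℕ := ∑ i ∈ Finset.range (sigma n), bit i n * 2 ^ i

lemma sigma_spec {n : ℕ} (h : Convergent n) : T^[sigma n] n = 1 :=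
  Nat.sInf_mem h

lemma sigma_pos {n : ℕ} (h2 : 2 ≤ n) (h : Convergent n) : 0 < sigma n := by
  rcases Nat.eq_zero_or_pos (sigma n) with h0 | h0
  · have := sigma_spec h
    rw [h0] at this
    simp at this
    omega
  · exact h0

lemma T_inj {x y : ℕ} (hp : x % 2 = y % 2) (h : T x = T y) : x = y := by
  unfold T at h
  rcases Nat.even_or_odd x with he | ho
  · have hx : x % 2 = 0 := Nat.even_iff.mp he
    have hy : y % 2 = 0 := by omega
    rw [if_pos hx, if_pos hy] at h
    omega
  · have hx : x % 2 = 1 := Nat.odd_iff.mp ho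
    have hy : y % 2 = 1 := by omega
    rw [if_neg (by omega), if_neg (by omega)] at h
    omega

lemma bit_le_one (i n : ℕ) : bit i n ≤ 1 := by
  unfold bit; split <;> simp

lemma even_of_T_eq_one {x : ℕ} (h : T x = 1) : x % 2 = 0 := by
  unfold T at h
  split at h <;> omega

lemma top_bit {n : ℕ} (h2 : 2 ≤ n) (h : Convergent n) : bit (sigma n - 1) n = 1 := by
  have hpos := sigma_pos h2 h
  have hσ : sigma n - 1 + 1 = sigma n := by omega
  have hstep : T (T^[sigma n - 1] n) = 1 := by
    rw [← Function.iterate_succ_apply' T (sigma n - 1) n]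
    rw [show (sigma n - 1).succ = sigma n from hσ]
    exact sigma_spec h
  unfold bit
  rw [if_pos (even_of_T_eq_one hstep)]

/-- Generic binary-digit uniqueness. -/
lemma digits_unique : ∀ (s : ℕ) (b c : ℕ → ℕ), (∀ i, b i ≤ 1) → (∀ i, c i ≤ 1) →
    (∑ i ∈ Finset.range s, b i * 2 ^ i) = (∑ i ∈ Finset.range s, c i * 2 ^ i) →
    ∀ i < s, b i = c i := by
  intro s
  induction s with
  | zero => intro b c _ _ _ i hi; omega
  | succ s ih =>
    intro b c hb hc hsum i hi
    rw [Finset.sum_range_succ', Finset.sum_range_succ'] at hsum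
    simp only [pow_zero, mul_one] at hsum
    have hrw : ∀ (f : ℕ → ℕ), (∑ i ∈ Finset.range s, f (i + 1) * 2 ^ (i + 1)) =
        2 * ∑ i ∈ Finset.range s, f (i + 1) * 2 ^ i := by
      intro f
      rw [Finset.mul_sum]
      apply Finset.sum_congr rfl
      intro j _
      ring
    rw [hrw b, hrw c] at hsum
    have hb0 := hb 0
    have hc0 := hc 0
    have hbc0 : b 0 = c 0 := by omega
    have hsum' : (∑ i ∈ Finset.range s, b (i + 1) * 2 ^ i) =
        (∑ i ∈ Finset.range s, c (i + 1) * 2 ^ i) := by omega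
    match i with
    | 0 => exact hbc0
    | (j + 1) =>
      exact ih (fun k => b (k + 1)) (fun k => c (k + 1)) (fun k => hb (k + 1))
        (fun k => hc (k + 1)) hsum' j (by omega)

lemma sum_lt {s : ℕ} {b : ℕ → ℕ} (hb : ∀ i, b i ≤ 1) :
    (∑ i ∈ Finset.range s, b i * 2 ^ i) < 2 ^ s := by
  calc (∑ i ∈ Finset.range s, b i * 2 ^ i)
      ≤ ∑ i ∈ Finset.range s, 1 * 2 ^ i := by
        apply Finset.sum_le_sum
        intro i _
        exact Nat.mul_le_mul_right _ (hb i)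
    _ = 2 ^ s - 1 := by
        simp only [one_mul]
        rw [Nat.geomSum_eq (le_refl 2)]
        omega
    _ < 2 ^ s := by
        have : 0 < 2 ^ s := Nat.pow_pos (by norm_num)
        omega

lemma sum_ge {s : ℕ} {b : ℕ → ℕ} (hs : 0 < s) (htop : b (s - 1) = 1) :
    2 ^ (s - 1) ≤ (∑ i ∈ Finset.range s, b i * 2 ^ i) := by
  have hmem : s - 1 ∈ Finset.range s := Finset.mem_range.mpr (by omega)
  have := Finset.single_le_sum (f := fun i => b i * 2 ^ i) (fun i _ => Nat.zero_le _) hmem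
  simp only [htop, one_mul] at this
  exact this

lemma sigma_eq_of_enc_eq {m n : ℕ} (hm2 : 2 ≤ m) (hmc : Convergent m)
    (hn2 : 2 ≤ n) (hnc : Convergent n) (h : enc m = enc n) : sigma m = sigma n := by
  by_contra hne
  wlog hlt : sigma m < sigma n generalizing m n
  · exact this hn2 hnc hm2 hmc h.symm (Ne.symm hne) (by omega)
  have h1 : enc m < 2 ^ sigma m := sum_lt (fun i => bit_le_one i m)
  have h2 : 2 ^ (sigma n - 1) ≤ enc n :=
    sum_ge (sigma_pos hn2 hnc) (top_bit hn2 hnc)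
  have h3 : 2 ^ sigma m ≤ 2 ^ (sigma n - 1) :=
    Nat.pow_le_pow_right (by norm_num) (by omega)
  omega

/-- The decimal encoding is injective on the set of convergent integers `≥ 2`. -/
theorem decimal_encoding_injective :
    Set.InjOn enc {n : ℕ | 2 ≤ n ∧ Convergent n} := by
  rintro m ⟨hm2, hmc⟩ n ⟨hn2, hnc⟩ h
  have hs : sigma m = sigma n := sigma_eq_of_enc_eq hm2 hmc hn2 hnc h
  have hbits : ∀ i < sigma m, bit i m = bit i n := by
    apply digits_unique (sigma m) (fun i => bit i m) (fun i => bit i n)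
      (fun i => bit_le_one i m) (fun i => bit_le_one i n)
    unfold enc at h
    rw [← hs] at h
    exact h
  -- descending induction
  have key : ∀ j, j ≤ sigma m → T^[sigma m - j] m = T^[sigma m - j] n := by
    intro j
    induction j with
    | zero =>
      intro _
      simp only [Nat.sub_zero]
      rw [sigma_spec hmc, hs, sigma_spec hnc]
    | succ j ih =>
      intro hj
      have hprev := ih (by omega)
      set i := sigma m - (j + 1) with hi
      have hii : sigma m - j = i + 1 := by omega
      rw [hii] at hprev
      have hilt : i < sigma m := by omega
      have hbit := hbits i hilt
      have hpar : T^[i] m % 2 = T^[i] n % 2 := by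
        unfold bit at hbit
        split at hbit <;> split at hbit <;> omega
      apply T_inj hpar
      rw [← Function.iterate_succ_apply' T i m, ← Function.iterate_succ_apply' T i n]
      exact hprev
  have := key (sigma m) (le_refl _)
  simpa using this
end

section
/- (Theorem 1) Let n ≥ 2 be convergent with n ∉ {2, 4, 8}, let k = σ∞(n), and let q_0, …, q_k be the turtle walk driven by the bits c_i = b_i(n) of the binary encoding of n, processed from the rightmost bit b_0 first to the leftmost bit b_{k−1} last. Then k ≥ 4 and q_k = q_{k−4}; that is, the Collatz curve of every convergent n ≥ 2 other than n = 2, 4, 8 ends with a cycle (a unit square). -/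
/-- Clockwise rotation by 90°: `ρ(x,y) = (y, -x)`. -/
def rho (d : ℤ × ℤ) : ℤ × ℤ := (d.2, -d.1)

/-- Counterclockwise rotation by 90°: `λ(x,y) = (-y, x)`. -/
def lam (d : ℤ × ℤ) : ℤ × ℤ := (-d.2, d.1)

/-- The turtle's direction after processing the first `i` bits of `c`:
`d 0 = (1,0)`, and `d (i+1) = ρ (d i)` if `c i = 1`, `λ (d i)` if `c i = 0`. -/
def dirW (c : ℕ → ℕ) : ℕ → ℤ × ℤ
  | 0 => (1, 0)
  | i + 1 => if c i = 1 then rho (dirW c i) else lam (dirW c i)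

/-- The turtle's position after processing the first `i` bits of `c`:
`q 0 = (0,0)` and `q (i+1) = q i + d (i+1)`. -/
def posW (c : ℕ → ℕ) : ℕ → ℤ × ℤ
  | 0 => (0, 0)
  | i + 1 => posW c i + dirW c (i + 1)

lemma T_pre1 {m : ℕ} (h : T m = 1) : m = 2 := by
  unfold T at h; split at h <;> omega

lemma T_pre2 {m : ℕ} (h : T m = 2) : m = 4 ∨ m = 1 := by
  unfold T at h; split at h <;> omega

lemma T_pre4 {m : ℕ} (h : T m = 4) : m = 8 := by
  unfold T at h; split at h <;> omega

lemma rho_sum (v : ℤ × ℤ) : v + rho v + rho (rho v) + rho (rho (rho v)) = 0 := by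
  simp [rho, Prod.ext_iff]


/-- Theorem 1: for every convergent `n ≥ 2` other than `2, 4, 8`, the Collatz
curve of `n` (the turtle walk driven by the bits of the binary encoding of `n`,
rightmost bit first) ends with a cycle, i.e. a unit square: with `k = σ∞(n)`
we have `k ≥ 4` and `q k = q (k - 4)`. -/
theorem collatz_curve_ends_with_square (n : ℕ) (hn : 2 ≤ n) (hc : Convergent n)
    (h2 : n ≠ 2) (h4 : n ≠ 4) (h8 : n ≠ 8) :
    4 ≤ sigma n ∧
    posW (fun i => bit i n) (sigma n) = posW (fun i => bit i n) (sigma n - 4) := by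
  have hne : {k | T^[k] n = 1}.Nonempty := hc
  have hk : T^[sigma n] n = 1 := Nat.sInf_mem hne
  have hmin : ∀ j, j < sigma n → T^[j] n ≠ 1 := by
    intro j hj h1
    have hle : sigma n ≤ j := Nat.sInf_le h1
    omega
  have hk4 : 4 ≤ sigma n := by
    by_contra h
    push_neg at h
    interval_cases hx : (sigma n)
    · simp at hk; omega
    · rw [show (1:ℕ) = 0 + 1 from rfl, Function.iterate_succ_apply'] at hk
      have := T_pre1 hk; simp at this; omega
    · rw [show (2:ℕ) = 1 + 1 from rfl, Function.iterate_succ_apply'] at hk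
      have h' := T_pre1 hk
      rw [show (1:ℕ) = 0 + 1 from rfl, Function.iterate_succ_apply'] at h'
      rcases T_pre2 h' with h'' | h''
      · simp at h''; omega
      · exact hmin 0 (by omega) (by simpa using h'')
    · rw [show (3:ℕ) = 2 + 1 from rfl, Function.iterate_succ_apply'] at hk
      have h' := T_pre1 hk
      rw [show (2:ℕ) = 1 + 1 from rfl, Function.iterate_succ_apply'] at h'
      rcases T_pre2 h' with h'' | h''
      · have h3 := T_pre4 (by rwa [show (1:ℕ) = 0 + 1 from rfl, Function.iterate_succ_apply'] at h'')
        simp at h3; omega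
      · exact hmin 1 (by omega) h''
  obtain ⟨m, hm⟩ : ∃ m, sigma n = m + 4 := ⟨sigma n - 4, by omega⟩
  rw [hm] at hk hmin ⊢
  have e3 : T^[m + 3] n = 2 := by
    rw [show m + 4 = (m + 3) + 1 from rfl, Function.iterate_succ_apply'] at hk
    exact T_pre1 hk
  have e2 : T^[m + 2] n = 4 := by
    rw [show m + 3 = (m + 2) + 1 from rfl, Function.iterate_succ_apply'] at e3
    rcases T_pre2 e3 with h | h
    · exact h
    · exact absurd h (hmin (m + 2) (by omega))
  have e1 : T^[m + 1] n = 8 := by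
    rw [show m + 2 = (m + 1) + 1 from rfl, Function.iterate_succ_apply'] at e2
    exact T_pre4 e2
  refine ⟨by omega, ?_⟩
  set c : ℕ → ℕ := fun i => bit i n with hc'
  have cb1 : c (m + 1) = 1 := by simp [hc', bit, e1]
  have cb2 : c (m + 2) = 1 := by simp [hc', bit, e2]
  have cb3 : c (m + 3) = 1 := by simp [hc', bit, e3]
  have d2 : dirW c (m + 2) = rho (dirW c (m + 1)) := by
    show dirW c ((m + 1) + 1) = _
    rw [dirW, cb1]; simp
  have d3 : dirW c (m + 3) = rho (dirW c (m + 2)) := by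
    show dirW c ((m + 2) + 1) = _
    rw [dirW, cb2]; simp
  have d4 : dirW c (m + 4) = rho (dirW c (m + 3)) := by
    show dirW c ((m + 3) + 1) = _
    rw [dirW, cb3]; simp
  have hp : posW c (m + 4) = posW c m + (dirW c (m + 1) + dirW c (m + 2) + dirW c (m + 3) + dirW c (m + 4)) := by
    show posW c (((m + 1) + 1 + 1) + 1) = _
    rw [posW, posW, posW, posW]; abel
  rw [show m + 4 - 4 = m from rfl]
  rw [hp, d4, d3, d2, rho_sum, add_zero]
end
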